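/- arXiv:1908.11195 — 2 statements merged into one kernel-verified Lean document; each statement's English description precedes it below -/
import Mathlib

section
/- For every q with 0 < q ≤ 1 and every positive integer n, |∑_{j=1}^{n} Γ(n-j+q)/Γ(n-j+1) − n^q/q| ≤ 1/q. -/
/-!
With `k = n - j` the sum telescopes, since
`q Γ(k+q)/Γ(k+1) = Γ(k+1+q)/Γ(k+1) - Γ(k+q)/Γ(k)`; hence it equals `Γ(n+q) / (q Γ(n))`.
Log-convexity of `Γ` gives Wendel's bounds `x (x+q)^(q-1) ≤ Γ(x+q)/Γ(x) ≤ x^q`, and the gap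
between the two ends is at most `q (x+q)^(q-1) ≤ q^q ≤ 1`.
-/

open Finset

namespace Real

theorem Gamma_add_le_Gamma_mul_rpow {y t : ℝ} (hy : 0 < y) (ht0 : 0 ≤ t) (ht1 : t ≤ 1) :
    Gamma (y + t) ≤ Gamma y * y ^ t := by
  have hconv := convexOn_log_Gamma.2 (Set.mem_Ioi.2 hy) (Set.mem_Ioi.2 (by linarith : 0 < y + 1))
    (sub_nonneg.2 ht1) ht0 (by ring)
  simp only [Function.comp_apply, smul_eq_mul] at hconv
  rw [show (1 - t) * y + t * (y + 1) = y + t by ring, Gamma_add_one hy.ne',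
    log_mul hy.ne' (Gamma_pos_of_pos hy).ne'] at hconv
  rw [← log_le_log_iff (Gamma_pos_of_pos (by linarith)) (by positivity),
    log_mul (Gamma_pos_of_pos hy).ne' (by positivity), log_rpow hy]
  linarith

theorem Gamma_add_div_Gamma_le_rpow {x q : ℝ} (hx : 0 < x) (hq0 : 0 ≤ q) (hq1 : q ≤ 1) :
    Gamma (x + q) / Gamma x ≤ x ^ q := by
  rw [div_le_iff₀ (Gamma_pos_of_pos hx), mul_comm]
  exact Gamma_add_le_Gamma_mul_rpow hx hq0 hq1

theorem mul_rpow_sub_one_le_Gamma_add_div_Gamma {x q : ℝ} (hx : 0 < x) (hq0 : 0 ≤ q)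
    (hq1 : q ≤ 1) : x * (x + q) ^ (q - 1) ≤ Gamma (x + q) / Gamma x := by
  have hxq : 0 < x + q := by linarith
  have h := Gamma_add_le_Gamma_mul_rpow hxq (sub_nonneg.2 hq1) (by linarith)
  rw [show x + q + (1 - q) = x + 1 by ring, Gamma_add_one hx.ne'] at h
  rw [le_div_iff₀ (Gamma_pos_of_pos hx), show q - 1 = -(1 - q) by ring, rpow_neg hxq.le,
    mul_right_comm, ← div_eq_mul_inv, div_le_iff₀ (by positivity)]
  exact h

theorem rpow_sub_mul_rpow_sub_one_le_one {x q : ℝ} (hx : 0 ≤ x) (hq0 : 0 < q) (hq1 : q ≤ 1) :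
    x ^ q - x * (x + q) ^ (q - 1) ≤ 1 := by
  have hxq : 0 < x + q := by linarith
  have hsplit : (x + q) ^ q = (x + q) ^ (q - 1) * (x + q) := by
    rw [← rpow_add_one hxq.ne', sub_add_cancel]
  have hmono : x ^ q ≤ (x + q) ^ q := rpow_le_rpow hx (by linarith) hq0.le
  have hanti : (x + q) ^ (q - 1) ≤ q ^ (q - 1) := rpow_le_rpow_of_nonpos hq0 (by linarith)
    (by linarith)
  have hqq : q ^ (q - 1) * q ≤ 1 := by
    rw [← rpow_add_one hq0.ne', sub_add_cancel]
    exact rpow_le_one hq0.le hq1 hq0.le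
  nlinarith

theorem abs_Gamma_add_div_Gamma_sub_rpow_le_one {x q : ℝ} (hx : 0 < x) (hq0 : 0 < q)
    (hq1 : q ≤ 1) : |Gamma (x + q) / Gamma x - x ^ q| ≤ 1 := by
  have hupper := Gamma_add_div_Gamma_le_rpow hx hq0.le hq1
  have hlower := mul_rpow_sub_one_le_Gamma_add_div_Gamma hx hq0.le hq1
  have hgap := rpow_sub_mul_rpow_sub_one_le_one hx.le hq0 hq1
  rw [abs_le]
  constructor <;> linarith

-- `Gamma 0 = 0` makes the `k = 0` term of the telescoping sum come out right as well.
theorem mul_sum_range_Gamma_add_div_Gamma_add_one {q : ℝ} (hq : ∀ m : ℕ, q ≠ -m) (n : ℕ) :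
    q * ∑ k ∈ range n, Gamma (k + q) / Gamma (k + 1) = Gamma (n + q) / Gamma n := by
  have hstep : ∀ k : ℕ, q * (Gamma (k + q) / Gamma (k + 1))
      = Gamma ((k + 1 : ℕ) + q) / Gamma (k + 1 : ℕ) - Gamma (k + q) / Gamma k := by
    intro k
    have hkq : (k : ℝ) + q ≠ 0 := fun h => hq k (by linarith)
    push_cast
    rw [add_right_comm, Gamma_add_one hkq]
    rcases k.eq_zero_or_pos with rfl | hk
    · simp
    · have hk' : (0 : ℝ) < k := Nat.cast_pos.2 hk
      rw [Gamma_add_one hk'.ne']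
      field_simp [(Gamma_pos_of_pos hk').ne']
      ring
  rw [mul_sum, sum_congr rfl fun k _ => hstep k,
    sum_range_sub (fun k : ℕ => Gamma (k + q) / Gamma k)]
  simp

end Real

theorem Finset.sum_Icc_one_natCast_sub {R M : Type*} [AddGroupWithOne R] [AddCommMonoid M]
    (f : R → M) (n : ℕ) : ∑ j ∈ Icc 1 n, f ((n : R) - j) = ∑ k ∈ range n, f k := by
  refine sum_nbij' (fun j => n - j) (fun k => n - k) ?_ ?_ ?_ ?_
    fun j hj => by rw [Nat.cast_sub (mem_Icc.1 hj).2]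
  all_goals intro i hi; simp only [mem_Icc, mem_range] at hi ⊢; omega

open Real in
theorem coeff_sum_bound (q : ℝ) (hq0 : 0 < q) (hq1 : q ≤ 1) (n : ℕ) (hn : 0 < n) :
    |(∑ j ∈ Finset.Icc 1 n, Real.Gamma ((n : ℝ) - j + q) / Real.Gamma ((n : ℝ) - j + 1))
      - (n : ℝ) ^ q / q| ≤ 1 / q := by
  have hreindex := sum_Icc_one_natCast_sub (fun x : ℝ => Gamma (x + q) / Gamma (x + 1)) n
  have htelescope := mul_sum_range_Gamma_add_div_Gamma_add_one (q := q)
    (fun m => ((neg_nonpos.2 m.cast_nonneg).trans_lt hq0).ne') n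
  have hsum : ∑ j ∈ Icc 1 n, Gamma ((n : ℝ) - j + q) / Gamma ((n : ℝ) - j + 1)
      = (Gamma (n + q) / Gamma n) / q := by
    rw [hreindex, ← htelescope]
    field_simp
  rw [hsum, ← sub_div, abs_div, abs_of_pos hq0, div_le_div_iff_of_pos_right hq0]
  exact abs_Gamma_add_div_Gamma_sub_rpow_le_one (Nat.cast_pos.2 hn) hq0 hq1
end

section
/- Let q ∈ (0,1) and suppose f : ℝ → ℝ is bounded, |f(y)| ≤ C for all y. If x(n) = x₀ + (1/Γ(q)) ∑_{j=1}^{n} (Γ(n−j+q)/Γ(n−j+1)) f(x(j−1)), then |x(n) − x₀| ≤ C·(n^q + 1)/(q·Γ(q)) for all n ≥ 1. -/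
/-!
The weights `Γ(k + q) / Γ(k + 1)`, `k < n`, telescope: their sum is `n Γ(n + q) / (q Γ(n + 1))`,
and Gautschi's inequality `Γ(n + q) ≤ Γ(n) n^q` (log-convexity of `Γ`) bounds it by `n^q / q`.
Since `|f| ≤ C`, the orbit moves at most `C / Γ(q)` times this sum away from `x₀`.
-/

open Real Finset

theorem Real.Gamma_add_le_Gamma_mul_rpow_s11 {s q : ℝ} (hs : 0 < s) (hq0 : 0 < q) (hq1 : q < 1) :
    Gamma (s + q) ≤ Gamma s * s ^ q := by
  have hconv := Gamma_mul_add_mul_le_rpow_Gamma_mul_rpow_Gamma hs (by linarith : 0 < s + 1)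
    (sub_pos.2 hq1) hq0 (by ring)
  have hΓ := Gamma_pos_of_pos hs
  calc Gamma (s + q) = Gamma ((1 - q) * s + q * (s + 1)) := by ring_nf
    _ ≤ Gamma s ^ (1 - q) * Gamma (s + 1) ^ q := hconv
    _ = Gamma s * s ^ q := by
      rw [Gamma_add_one hs.ne', mul_rpow hs.le hΓ.le, mul_left_comm, ← rpow_add hΓ,
        sub_add_cancel, rpow_one, mul_comm]

theorem Real.sum_range_Gamma_div_Gamma_add_one {q : ℝ} (hq : 0 < q) (n : ℕ) :
    ∑ k ∈ range n, Gamma (k + q) / Gamma (k + 1) = n * Gamma (n + q) / (q * Gamma (n + 1)) := by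
  induction n with
  | zero => simp
  | succ n ih =>
    have hn : (0 : ℝ) < n + 1 := by positivity
    have hΓ := Gamma_pos_of_pos hn
    rw [sum_range_succ, ih]
    push_cast
    rw [show (n : ℝ) + 1 + q = n + q + 1 by ring,
      Gamma_add_one (by positivity : (n : ℝ) + q ≠ 0), Gamma_add_one hn.ne']
    field_simp

theorem Real.sum_range_Gamma_div_Gamma_add_one_le {q : ℝ} (hq0 : 0 < q) (hq1 : q < 1) (n : ℕ) :
    ∑ k ∈ range n, Gamma (k + q) / Gamma (k + 1) ≤ n ^ q / q := by
  rw [sum_range_Gamma_div_Gamma_add_one hq0]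
  rcases n.eq_zero_or_pos with rfl | hn
  · simp [zero_rpow hq0.ne']
  have hn : (0 : ℝ) < n := by exact_mod_cast hn
  rw [Gamma_add_one hn.ne', div_le_div_iff₀ (by positivity) hq0]
  calc n * Gamma (n + q) * q ≤ n * (Gamma n * n ^ q) * q := by
        gcongr; exact Gamma_add_le_Gamma_mul_rpow_s11 hn hq0 hq1
    _ = n ^ q * (q * (n * Gamma n)) := by ring

theorem Finset.sum_Icc_natCast_sub {M : Type*} [AddCommMonoid M] (g : ℝ → M) (n : ℕ) :
    ∑ j ∈ Icc 1 n, g ((n : ℝ) - j) = ∑ k ∈ range n, g k := by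
  calc ∑ j ∈ Icc 1 n, g ((n : ℝ) - j) = ∑ j ∈ Ico 1 (n + 1), g ((n - j : ℕ) : ℝ) := by
        refine sum_congr rfl fun j hj => ?_
        rw [Nat.cast_sub (mem_Icc.1 hj).2]
    _ = ∑ k ∈ range n, g k := by
        rw [sum_Ico_reflect (fun k : ℕ => g k) 1 le_rfl, Nat.sub_self, Nat.add_sub_cancel,
          range_eq_Ico]

theorem Finset.abs_sum_mul_le_mul_sum {ι : Type*} (s : Finset ι) {w a : ι → ℝ} {C : ℝ}
    (hw : ∀ i ∈ s, 0 ≤ w i) (ha : ∀ i ∈ s, |a i| ≤ C) :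
    |∑ i ∈ s, w i * a i| ≤ C * ∑ i ∈ s, w i := by
  rw [mul_sum]
  refine (abs_sum_le_sum_abs _ _).trans (sum_le_sum fun i hi => ?_)
  rw [abs_mul, abs_of_nonneg (hw i hi), mul_comm]
  exact mul_le_mul_of_nonneg_right (ha i hi) (hw i hi)

theorem fractional_orbit_bound (q : ℝ) (hq : q ∈ Set.Ioo (0:ℝ) 1) (x₀ C : ℝ)
    (f : ℝ → ℝ) (hf : ∀ y, |f y| ≤ C) (x : ℕ → ℝ)
    (hx : ∀ n : ℕ, x n = x₀ + (1 / Real.Gamma q) *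
      ∑ j ∈ Finset.Icc 1 n,
        Real.Gamma ((n : ℝ) - j + q) / Real.Gamma ((n : ℝ) - j + 1) * f (x (j - 1))) :
    ∀ n : ℕ, 1 ≤ n → |x n - x₀| ≤ C * ((n : ℝ) ^ q + 1) / (q * Real.Gamma q) := by
  obtain ⟨hq0, hq1⟩ := hq
  intro n _
  have hΓq := Gamma_pos_of_pos hq0
  have hw : ∀ j ∈ Icc 1 n, 0 ≤ Gamma ((n : ℝ) - j + q) / Gamma ((n : ℝ) - j + 1) := by
    intro j hj
    have hjn : (j : ℝ) ≤ n := by exact_mod_cast (mem_Icc.1 hj).2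
    exact div_nonneg (Gamma_nonneg_of_nonneg (by linarith)) (Gamma_nonneg_of_nonneg (by linarith))
  have hC : 0 ≤ C := (abs_nonneg _).trans (hf 0)
  calc |x n - x₀|
      = |∑ j ∈ Icc 1 n, Gamma ((n : ℝ) - j + q) / Gamma ((n : ℝ) - j + 1) * f (x (j - 1))|
          / Gamma q := by
        rw [hx n, add_sub_cancel_left, abs_mul, abs_of_pos (by positivity), one_div_mul_eq_div]
    _ ≤ C * ∑ k ∈ range n, Gamma (k + q) / Gamma (k + 1) / Gamma q := by
        rw [← sum_div, ← mul_div_assoc,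
          ← sum_Icc_natCast_sub (fun t => Gamma (t + q) / Gamma (t + 1)) n]
        gcongr
        exact abs_sum_mul_le_mul_sum _ hw fun j _ => hf _
    _ ≤ C * (n ^ q / q) / Gamma q := by
        rw [← sum_div, ← mul_div_assoc]
        gcongr
        exact sum_range_Gamma_div_Gamma_add_one_le hq0 hq1 n
    _ ≤ C * ((n : ℝ) ^ q + 1) / (q * Gamma q) := by
        rw [mul_div_assoc', div_div]
        gcongr
        linarith
end
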